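/- arXiv:1703.10652 — 5 statements merged into one kernel-verified Lean document; each statement's English description precedes it below -/
import Mathlib

section
/- Let h be a positive integer and let (n_k, 0 ≤ k ≤ h+1) be a sequence of positive integers with n_0 = n_{h+1} = 1. Then the sum over k ∈ [0,h] with n_k ≤ n_{k+1} of n_k/(n_k+n_{k+1}), plus the sum over k ∈ [0,h] with n_k > n_{k+1} of log((n_k+n_{k+1})/n_{k+1}), is at least h/3. -/
/-!
Every summand is at least `(1 + log n_k - log n_{k+1}) / 3`: for `n_k ≤ n_{k+1}` this follows
from `log x ≤ x - 1`, and for `n_k > n_{k+1}` from the AM-GM bound `27/4 · a b² ≤ (a + b)³`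
together with `e < 27/4`. The lower bounds telescope to `(h + 1) / 3` since `n_0 = n_{h+1} = 1`.
-/

open Finset Real

noncomputable def stepWeight (a b : ℝ) : ℝ :=
  if a ≤ b then a / (a + b) else log ((a + b) / b)

lemma one_add_log_div_div_three_le_div_add {a b : ℝ} (ha : 0 < a) (hb : 0 < b) (hab : a ≤ 2 * b) :
    (1 + log (a / b)) / 3 ≤ a / (a + b) :=
  calc (1 + log (a / b)) / 3 ≤ (1 + (a / b - 1)) / 3 := by
        gcongr; exact log_le_sub_one_of_pos (by positivity)
    _ = a / (3 * b) := by field_simp; ring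
    _ ≤ a / (a + b) := by gcongr; linarith

lemma exp_one_mul_mul_sq_le_add_pow_three {a b : ℝ} (ha : 0 ≤ a) (hb : 0 ≤ b) :
    exp 1 * (a * b ^ 2) ≤ (a + b) ^ 3 := by
  have amgm : 27 / 4 * (a * b ^ 2) ≤ (a + b) ^ 3 := by
    -- `(a + b)³ - 27/4 · a b² = (a - b/2)² (a + 4b)`
    nlinarith [mul_nonneg (sq_nonneg (a - b / 2)) (by positivity : 0 ≤ a + 4 * b)]
  have he : exp 1 < 27 / 4 := exp_one_lt_d9.trans (by norm_num)
  nlinarith [mul_nonneg ha (sq_nonneg b)]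

lemma one_add_log_div_div_three_le_log_add_div {a b : ℝ} (ha : 0 < a) (hb : 0 < b) :
    (1 + log (a / b)) / 3 ≤ log ((a + b) / b) := by
  have key : exp 1 * (a / b) ≤ ((a + b) / b) ^ 3 := by
    have := exp_one_mul_mul_sq_le_add_pow_three (div_pos ha hb).le zero_le_one
    rwa [one_pow, mul_one, div_add_one hb.ne'] at this
  have hlog := log_le_log (by positivity) key
  rw [log_mul (exp_pos 1).ne' (div_pos ha hb).ne', log_exp, log_pow] at hlog
  push_cast at hlog
  linarith

lemma one_add_log_sub_log_div_three_le_stepWeight {a b : ℝ} (ha : 0 < a) (hb : 0 < b) :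
    (1 + log a - log b) / 3 ≤ stepWeight a b := by
  rw [add_sub_assoc, ← log_div ha.ne' hb.ne', stepWeight]
  split_ifs with hab
  · exact one_add_log_div_div_three_le_div_add ha hb (by linarith)
  · exact one_add_log_div_div_three_le_log_add_div ha hb

lemma add_log_sub_log_div_three_le_sum_stepWeight (x : ℕ → ℝ) (m : ℕ) (hx : ∀ k ≤ m, 0 < x k) :
    (m + log (x 0) - log (x m)) / 3 ≤ ∑ k ∈ range m, stepWeight (x k) (x (k + 1)) :=
  calc (m + log (x 0) - log (x m)) / 3 = ∑ k ∈ range m, (1 + log (x k) - log (x (k + 1))) / 3 := by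
        simp only [← sum_div, add_sub_assoc, sum_add_distrib, sum_range_sub' (fun k => log (x k)),
          sum_const, card_range, nsmul_eq_mul, mul_one]
    _ ≤ _ := sum_le_sum fun k hk => one_add_log_sub_log_div_three_le_stepWeight
        (hx k (mem_range.mp hk).le) (hx (k + 1) (mem_range.mp hk))

theorem stmt0_general (h : ℕ) (n : ℕ → ℕ)
    (hn : ∀ k ≤ h + 1, 0 < n k) (h0 : n 0 = 1) (hlast : n (h + 1) = 1) :
    (h : ℝ) / 3 ≤
      (∑ k ∈ (range (h + 1)).filter (fun k => n k ≤ n (k + 1)),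
          (n k : ℝ) / ((n k : ℝ) + (n (k + 1) : ℝ))) +
        ∑ k ∈ (range (h + 1)).filter (fun k => n (k + 1) < n k),
          Real.log (((n k : ℝ) + (n (k + 1) : ℝ)) / (n (k + 1) : ℝ)) := by
  have hbound := add_log_sub_log_div_three_le_sum_stepWeight (fun k => (n k : ℝ)) (h + 1)
    fun k hk => Nat.cast_pos.mpr (hn k hk)
  simp only [h0, hlast, Nat.cast_one, log_one, Nat.cast_add] at hbound
  calc (h : ℝ) / 3 ≤ ∑ k ∈ range (h + 1), stepWeight (n k) (n (k + 1)) := by linarith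
    _ = _ := by simp only [stepWeight, Nat.cast_le, sum_ite, not_le]

theorem stmt0 (h : ℕ) (hpos : 0 < h) (n : ℕ → ℕ)
    (hn : ∀ k ≤ h + 1, 0 < n k) (h0 : n 0 = 1) (hlast : n (h + 1) = 1) :
    (h : ℝ) / 3 ≤
      (∑ k ∈ (range (h + 1)).filter (fun k => n k ≤ n (k + 1)),
          (n k : ℝ) / ((n k : ℝ) + (n (k + 1) : ℝ))) +
        ∑ k ∈ (range (h + 1)).filter (fun k => n (k + 1) < n k),
          Real.log (((n k : ℝ) + (n (k + 1) : ℝ)) / (n (k + 1) : ℝ)) :=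
  stmt0_general h n hn h0 hlast
end

section
/- Let (S_t, t ≥ 0) be an integer random walk with i.i.d. steps X satisfying P(X ≥ −1) = 1 and E[X] ≤ 0, started at S_0 = x for an integer x > 0. Fix integers 0 < x_low < y (with the interval [x_low, y)) and let σ = inf{t : S_t ≤ 0}. Let U(σ) be the number of upcrossings of [x_low, y) completed before time σ. Then for every positive integer k, P_x(U(σ) ≥ k) ≤ ((x_low − 1)/y)^k. -/
/-!
Track the walk by the number `m` of upcrossings still missing and by whether it is currently inside
an upcrossing (it has dropped below `xl` and not yet reached `y`), and kill it when it hits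
`(-∞, 0]`. With `r = (xl - 1) / y`, the potential equal to `r ^ m` outside an upcrossing and to
`r ^ m * S / y` inside one is a supermartingale: inside an upcrossing `S / y` is one because the
steps have nonpositive mean and, the steps being `≥ -1`, the walk is killed exactly at `0`; an
upcrossing starts at a value `≤ xl - 1 = r y`, which costs exactly the factor `r`. The potential
starts at most at `r ^ k` and equals `1` once `k` upcrossings are completed, so the probability of
completing them by any fixed time is at most `r ^ k`.
-/

open MeasureTheory ProbabilityTheory

/-- `(upTimes S xl y i ω).1` is the time `τ_i⁻` at which the walk `S` goes below `xl` for the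
`(i+1)`-st relevant time, and `(upTimes S xl y i ω).2` is the time `τ_i⁺` at which the walk then
next reaches `y` or above, i.e. the time at which the `(i+1)`-st upcrossing of `[xl, y)` is
completed.  The value `⊤` means that the corresponding event never happens. -/
noncomputable def upTimes {Ω : Type*} (S : ℕ → Ω → ℤ) (xl y : ℤ) : ℕ → Ω → ℕ∞ × ℕ∞
  | 0, ω =>
      let a : ℕ∞ := ⨅ (t : ℕ) (_ : S t ω < xl), (t : ℕ∞)
      (a, ⨅ (t : ℕ) (_ : a < (t : ℕ∞) ∧ y ≤ S t ω), (t : ℕ∞))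
  | i + 1, ω =>
      let a : ℕ∞ :=
        ⨅ (t : ℕ) (_ : (upTimes S xl y i ω).2 < (t : ℕ∞) ∧ S t ω < xl), (t : ℕ∞)
      (a, ⨅ (t : ℕ) (_ : a < (t : ℕ∞) ∧ y ≤ S t ω), (t : ℕ∞))

lemma exists_eq_iInf_natCast_of_ne_top {P : ℕ → Prop} (h : ⨅ (t : ℕ) (_ : P t), (t : ℕ∞) ≠ ⊤) :
    ∃ n : ℕ, ⨅ (t : ℕ) (_ : P t), (t : ℕ∞) = n ∧ P n ∧ ∀ m < n, ¬ P m := by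
  classical
  have hP : ∃ t, P t := by
    by_contra! hP
    exact h (by simp [hP])
  refine ⟨Nat.find hP, le_antisymm (iInf₂_le _ (Nat.find_spec hP)) ?_, Nat.find_spec hP,
    fun m hm => Nat.find_min hP hm⟩
  exact le_iInf₂ fun t ht => by exact_mod_cast Nat.find_min' hP ht

lemma pos_of_le_of_lt_iInf {s : ℕ → ℤ} {u n : ℕ} (hu : u ≤ n)
    (hn : (n : ℕ∞) < ⨅ (t : ℕ) (_ : s t ≤ 0), (t : ℕ∞)) : 0 < s u := by
  by_contra! hsu
  exact (iInf₂_le u hsu).not_gt (lt_of_le_of_lt (by exact_mod_cast hu) hn)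

section DependsOn

variable {Ω ι κ β : Type*} [MeasurableSpace Ω] [Countable κ] [MeasurableSpace κ]
  [MeasurableSingletonClass κ] [MeasurableSpace β] {X : ι → Ω → κ} {F : (ι → κ) → β}
  {s : Finset ι}

lemma DependsOn.exists_measurable_comp [Nonempty β] (hF : DependsOn F s) :
    ∃ φ : ((i : (s : Set ι)) → κ) → β, Measurable φ ∧ F = φ ∘ (s : Set ι).domRestrict := by
  obtain ⟨φ, hφ⟩ := dependsOn_iff_exists_comp.mp hF
  exact ⟨φ, measurable_of_countable φ, hφ⟩

lemma DependsOn.measurable_comp (hX : ∀ i, Measurable (X i)) (hF : DependsOn F s) :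
    Measurable fun ω => F fun i => X i ω := by
  rcases isEmpty_or_nonempty Ω with hΩ | hΩ
  · exact Subsingleton.measurable
  obtain ⟨ω⟩ := hΩ
  have : Nonempty β := ⟨F fun i => X i ω⟩
  obtain ⟨φ, hφ, rfl⟩ := hF.exists_measurable_comp
  exact hφ.comp (measurable_pi_lambda _ fun i => hX i)

lemma DependsOn.indepFun_comp {μ : Measure Ω} (hind : iIndepFun X μ) (hX : ∀ i, Measurable (X i))
    (hF : DependsOn F s) {t : ι} (ht : t ∉ s) :
    IndepFun (fun ω => F fun i => X i ω) (X t) μ := by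
  have := hind.isProbabilityMeasure
  obtain ⟨ω⟩ := nonempty_of_isProbabilityMeasure μ
  have : Nonempty β := ⟨F fun i => X i ω⟩
  obtain ⟨φ, hφ, rfl⟩ := hF.exists_measurable_comp
  exact (hind.indepFun_finset s {t} (Finset.disjoint_singleton_right.mpr ht) hX).comp hφ
    (measurable_pi_apply (⟨t, Finset.mem_singleton_self t⟩ : ({t} : Finset ι)))

end DependsOn

lemma integral_le_of_le_add_mul_indepFun {Ω : Type*} [MeasurableSpace Ω] {μ : Measure Ω}
    {f g c ξ : Ω → ℝ} {C : ℝ} (hf : Integrable f μ) (hg : Integrable g μ)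
    (hc : AEStronglyMeasurable c μ) (hc₀ : 0 ≤ᵐ[μ] c) (hcC : ∀ᵐ ω ∂μ, c ω ≤ C)
    (hξ : Integrable ξ μ) (hξ₀ : ∫ ω, ξ ω ∂μ ≤ 0) (hind : IndepFun c ξ μ)
    (hle : ∀ᵐ ω ∂μ, g ω ≤ f ω + c ω * ξ ω) :
    ∫ ω, g ω ∂μ ≤ ∫ ω, f ω ∂μ := by
  have hcξ : Integrable (fun ω => c ω * ξ ω) μ :=
    hξ.bdd_mul hc (by filter_upwards [hc₀, hcC] with ω h₀ h₁ using by rwa [Real.norm_of_nonneg h₀])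
  have hmean : ∫ ω, c ω * ξ ω ∂μ ≤ 0 := by
    rw [hind.integral_fun_mul_eq_mul_integral hc hξ.1]
    exact mul_nonpos_of_nonneg_of_nonpos (integral_nonneg_of_ae hc₀) hξ₀
  calc ∫ ω, g ω ∂μ ≤ ∫ ω, f ω + c ω * ξ ω ∂μ := integral_mono_ae hg (hf.add hcξ) hle
    _ = ∫ ω, f ω ∂μ + ∫ ω, c ω * ξ ω ∂μ := integral_add hf hcξ
    _ ≤ ∫ ω, f ω ∂μ := by linarith

def walk (x : ℤ) (v : ℕ → ℤ) (t : ℕ) : ℤ := x + ∑ i ∈ Finset.range t, v i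

inductive UpcrossingState
  | low (m : ℕ)
  | high (m : ℕ)
  | killed

namespace UpcrossingState

/- `high m`: `m` upcrossings are still to be completed and the walk has not yet dropped below
`xl` since the last one; `high 0` is absorbing and signals success.  `low m`: the walk has dropped
below `xl` and, once it reaches `y`, `m` upcrossings will remain.  `killed`: the walk has hit
`(-∞, 0]`. -/
def next (xl y : ℤ) : UpcrossingState → ℤ → UpcrossingState
  | low m, s => if s ≤ 0 then killed else if y ≤ s then high m else low m
  | high 0, _ => high 0
  | high (m + 1), s => if s ≤ 0 then killed else if s < xl then low m else high (m + 1)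
  | killed, _ => killed

/-- `run xl y start s t` is the state after reading `s 0, …, s (t - 1)`. -/
def run (xl y : ℤ) (start : UpcrossingState) (s : ℕ → ℤ) : ℕ → UpcrossingState
  | 0 => start
  | t + 1 => next xl y (run xl y start s t) (s t)

/- `r ^ m * s / y` is `r ^ m` times the bound `s / y` on the probability that a walk started at
`s` reaches `y` before `0`. -/
noncomputable def potential (y : ℤ) (r : ℝ) : UpcrossingState → ℤ → ℝ
  | low m, s => r ^ m * s / y
  | high m, _ => r ^ m
  | killed, _ => 0

noncomputable def slope (y : ℤ) (r : ℝ) : UpcrossingState → ℝ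
  | low m => r ^ m / y
  | _ => 0

def Admissible (y : ℤ) : UpcrossingState → ℤ → Prop
  | low _, s => 0 < s ∧ s < y
  | _, _ => True

section Run

variable {xl y : ℤ} {start : UpcrossingState} {s s' : ℕ → ℤ}

lemma run_congr {t : ℕ} (h : ∀ u < t, s u = s' u) :
    run xl y start s t = run xl y start s' t := by
  induction t with
  | zero => rfl
  | succ t ih => simp only [run, ih fun u hu => h u (by omega), h t (by omega)]

lemma run_eq_of_next_eq {a b : ℕ} (hab : a ≤ b)
    (h : ∀ u, a ≤ u → u < b → next xl y (run xl y start s a) (s u) = run xl y start s a) :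
    run xl y start s b = run xl y start s a := by
  induction b, hab using Nat.le_induction with
  | base => rfl
  | succ b hab ih =>
    rw [run, ih fun u hau hub => h u hau (by omega)]
    exact h b hab (by omega)

lemma run_eq_high_zero_of_le {a b : ℕ} (hab : a ≤ b) (ha : run xl y start s a = high 0) :
    run xl y start s b = high 0 :=
  (run_eq_of_next_eq hab fun _ _ _ => by rw [ha, next]).trans ha

lemma run_succ_eq_high_of_upcrossing {a m : ℕ} {τd τu : ℕ∞}
    (ha : run xl y start s a = high (m + 1))
    (hτd : τd = ⨅ (t : ℕ) (_ : a ≤ t ∧ s t < xl), (t : ℕ∞))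
    (hτu : τu = ⨅ (t : ℕ) (_ : τd < t ∧ y ≤ s t), (t : ℕ∞))
    (hσ : τu < ⨅ (t : ℕ) (_ : s t ≤ 0), (t : ℕ∞)) :
    ∃ n : ℕ, τu = n ∧ run xl y start s (n + 1) = high m := by
  obtain ⟨n, hn, ⟨hdn, hyn⟩, hn_min⟩ := exists_eq_iInf_natCast_of_ne_top (hτu ▸ hσ.ne_top)
  obtain ⟨d, hd, ⟨had, hsd⟩, hd_min⟩ := exists_eq_iInf_natCast_of_ne_top (hτd ▸ hdn.ne_top)
  rw [hτd, hd, Nat.cast_lt] at hdn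
  rw [hτu, hn] at hσ
  have hpos : ∀ u ≤ n, 0 < s u := fun u hu => pos_of_le_of_lt_iInf hu hσ
  have hrun_d : run xl y start s d = high (m + 1) := by
    refine (run_eq_of_next_eq had fun u hau hud => ?_).trans ha
    have hu : xl ≤ s u := not_lt.mp fun h => hd_min u hud ⟨hau, h⟩
    rw [ha, next, if_neg (hpos u (by omega)).not_ge, if_neg hu.not_gt]
  have hrun_d' : run xl y start s (d + 1) = low m := by
    rw [run, hrun_d, next, if_neg (hpos d hdn.le).not_ge, if_pos hsd]
  have hrun_n : run xl y start s n = low m := by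
    refine (run_eq_of_next_eq hdn fun u hdu hun => ?_).trans hrun_d'
    have hu : s u < y := not_le.mp fun h => hn_min u hun ⟨by rw [hτd, hd]; exact_mod_cast hdu, h⟩
    rw [hrun_d', next, if_neg (hpos u hun.le).not_ge, if_neg hu.not_ge]
  refine ⟨n, hτu.trans hn, ?_⟩
  rw [run, hrun_n, next, if_neg (hpos n le_rfl).not_ge, if_pos hyn]

end Run

section UpTimes

variable {xl y : ℤ} {Ω : Type*} {S : ℕ → Ω → ℤ} {ω : Ω}

lemma upTimes_snd_eq (j : ℕ) : (upTimes S xl y j ω).2 =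
    ⨅ (t : ℕ) (_ : (upTimes S xl y j ω).1 < t ∧ y ≤ S t ω), (t : ℕ∞) := by
  cases j <;> rfl

lemma upTimes_snd_lt_succ_snd (j : ℕ) (h : (upTimes S xl y (j + 1) ω).2 ≠ ⊤) :
    (upTimes S xl y j ω).2 < (upTimes S xl y (j + 1) ω).2 := by
  rw [upTimes_snd_eq (j + 1)] at h ⊢
  obtain ⟨n, hn, ⟨hdn, -⟩, -⟩ := exists_eq_iInf_natCast_of_ne_top h
  obtain ⟨d, hd, ⟨hjd, -⟩, -⟩ := exists_eq_iInf_natCast_of_ne_top hdn.ne_top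
  rw [hn]
  exact hjd.trans (hd ▸ hdn)

lemma exists_run_succ_upTimes_snd (j m : ℕ)
    (hσ : (upTimes S xl y j ω).2 < ⨅ (t : ℕ) (_ : S t ω ≤ 0), (t : ℕ∞)) :
    ∃ n : ℕ, (upTimes S xl y j ω).2 = n ∧
      run xl y (high (j + 1 + m)) (S · ω) (n + 1) = high m := by
  induction j generalizing m with
  | zero =>
    refine run_succ_eq_high_of_upcrossing (a := 0) (by rw [run, zero_add, add_comm]) ?_
      (upTimes_snd_eq 0) hσ
    simp only [zero_le, true_and]
    rfl
  | succ j ih =>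
    obtain ⟨n, hn, hrun⟩ := ih (m + 1) ((upTimes_snd_lt_succ_snd j hσ.ne_top).trans hσ)
    rw [show j + 1 + (m + 1) = j + 1 + 1 + m by omega] at hrun
    refine run_succ_eq_high_of_upcrossing hrun ?_ (upTimes_snd_eq (j + 1)) hσ
    change ⨅ (t : ℕ) (_ : (upTimes S xl y j ω).2 < t ∧ S t ω < xl), (t : ℕ∞) = _
    simp only [hn, Nat.cast_lt, Nat.lt_iff_add_one_le]

lemma exists_run_eq_high_zero {k : ℕ} (hk : 1 ≤ k)
    (hσ : (upTimes S xl y (k - 1) ω).2 < ⨅ (t : ℕ) (_ : S t ω ≤ 0), (t : ℕ∞)) :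
    ∃ n, run xl y (high k) (S · ω) n = high 0 := by
  obtain ⟨n, -, hn⟩ := exists_run_succ_upTimes_snd (k - 1) 0 hσ
  rw [Nat.sub_add_cancel hk] at hn
  exact ⟨n + 1, hn⟩

end UpTimes

section Potential

variable {xl y : ℤ} {r : ℝ}

lemma admissible_next (hxy : xl ≤ y) (st : UpcrossingState) (s : ℤ) :
    Admissible y (next xl y st s) s := by
  rcases st with m | (_ | m) | _ <;> simp only [next] <;> (try split_ifs) <;>
    simp only [Admissible] <;> omega

lemma potential_nonneg (hr : 0 ≤ r) (hy : 0 < y) {st : UpcrossingState} {s : ℤ}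
    (h : Admissible y st s) : 0 ≤ potential y r st s := by
  rcases st with m | m | _
  · have : (0 : ℝ) < s := by exact_mod_cast h.1
    simp only [potential]
    positivity
  · exact pow_nonneg hr m
  · exact le_rfl

lemma potential_le_one (hr₀ : 0 ≤ r) (hr₁ : r ≤ 1) (hy : 0 < y) {st : UpcrossingState} {s : ℤ}
    (h : Admissible y st s) : potential y r st s ≤ 1 := by
  rcases st with m | m | _
  · have hy : (0 : ℝ) < y := by exact_mod_cast hy
    have hsy : (s : ℝ) / y ≤ 1 := (div_le_one hy).mpr (by exact_mod_cast h.2.le)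
    rw [potential, mul_div_assoc]
    exact mul_le_one₀ (pow_le_one₀ hr₀ hr₁) (div_nonneg (by exact_mod_cast h.1.le) hy.le) hsy
  · exact pow_le_one₀ hr₀ hr₁
  · exact zero_le_one

lemma slope_nonneg (hr : 0 ≤ r) (hy : 0 ≤ y) (st : UpcrossingState) : 0 ≤ slope y r st := by
  rcases st with m | m | _ <;> simp only [slope]
  · have : (0 : ℝ) ≤ y := by exact_mod_cast hy
    positivity
  all_goals exact le_rfl

lemma slope_le_one (hr₀ : 0 ≤ r) (hr₁ : r ≤ 1) (hy : 0 < y) (st : UpcrossingState) :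
    slope y r st ≤ 1 := by
  rcases st with m | m | _ <;> simp only [slope, zero_le_one]
  have hy : (1 : ℝ) ≤ y := by exact_mod_cast hy
  exact div_le_one_of_le₀ ((pow_le_one₀ hr₀ hr₁).trans hy) (by positivity)

lemma potential_next_le (hr : 0 ≤ r) (hy : 0 < y) (hxl : (xl : ℝ) - 1 ≤ r * y)
    {st : UpcrossingState} {s s' : ℤ} (h : Admissible y st s) (hs : s - 1 ≤ s') :
    potential y r (next xl y st s') s' ≤ potential y r st s + slope y r st * (s' - s) := by
  have hy : (0 : ℝ) < y := by exact_mod_cast hy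
  rcases st with m | (_ | m) | _
  · have hlin : potential y r (low m) s + slope y r (low m) * (s' - s) = r ^ m * s' / y := by
      simp only [potential, slope]
      field_simp
      ring
    have hs' : (0 : ℝ) ≤ s' := by exact_mod_cast (show 0 ≤ s' by have := h.1; omega)
    rw [hlin, next]
    split_ifs with h₀ h₁
    · simp only [potential]
      positivity
    · rw [potential, le_div_iff₀ hy]
      exact mul_le_mul_of_nonneg_left (by exact_mod_cast h₁) (pow_nonneg hr m)
    · exact le_rfl
  · simp [next, potential, slope]
  · simp only [next, slope, zero_mul, add_zero]
    split_ifs with h₀ h₁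
    · exact pow_nonneg hr _
    · have hs' : (s' : ℝ) ≤ r * y := by
        refine le_trans ?_ hxl
        exact_mod_cast (show s' ≤ xl - 1 by omega)
      rw [potential, potential, div_le_iff₀ hy, pow_succ, mul_assoc]
      gcongr
    · exact le_rfl
  · simp [next, potential, slope]

end Potential

section Walk

variable {xl y : ℤ} {r : ℝ} {Ω : Type*} [MeasurableSpace Ω] {μ : Measure Ω} {X : ℕ → Ω → ℤ}
  (start : UpcrossingState) (x : ℤ)

lemma dependsOn_run_walk {β : Type*} (g : UpcrossingState → ℤ → β) (t : ℕ) :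
    DependsOn (fun v => g (run xl y start (walk x v) (t + 1)) (walk x v t)) (Finset.range t) := by
  intro v w h
  have hwalk : ∀ u ≤ t, walk x v u = walk x w u := fun u hu => by
    refine congrArg (x + ·) (Finset.sum_congr rfl fun i hi => h i ?_)
    simp only [Finset.coe_range, Set.mem_Iio, Finset.mem_range] at hi ⊢
    omega
  dsimp only
  rw [run_congr (s' := walk x w) fun u hu => hwalk u (by omega), hwalk t le_rfl]

lemma integrable_potential_run_walk [IsFiniteMeasure μ] (hmeas : ∀ i, Measurable (X i))
    (hxy : xl ≤ y) (hy : 0 < y) (hr₀ : 0 ≤ r) (hr₁ : r ≤ 1) (t : ℕ) :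
    Integrable (fun ω => potential y r (run xl y start (walk x (X · ω)) (t + 1))
      (walk x (X · ω) t)) μ := by
  refine .of_bound ((dependsOn_run_walk start x _ t).measurable_comp hmeas).aestronglyMeasurable
    1 (.of_forall fun ω => ?_)
  have hadm : Admissible y (run xl y start (walk x (X · ω)) (t + 1)) (walk x (X · ω) t) :=
    admissible_next hxy _ _
  rw [Real.norm_of_nonneg (potential_nonneg hr₀ hy hadm)]
  exact potential_le_one hr₀ hr₁ hy hadm

lemma integral_potential_run_walk_succ_le (hmeas : ∀ i, Measurable (X i))
    (hindep : iIndepFun X μ) (hstep : ∀ i, ∀ᵐ ω ∂μ, -1 ≤ X i ω)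
    (hint : ∀ i, Integrable (fun ω => (X i ω : ℝ)) μ) (hmean : ∀ i, ∫ ω, (X i ω : ℝ) ∂μ ≤ 0)
    (hxy : xl ≤ y) (hy : 0 < y) (hr₀ : 0 ≤ r) (hr₁ : r ≤ 1) (hxl : (xl : ℝ) - 1 ≤ r * y)
    (t : ℕ) :
    ∫ ω, potential y r (run xl y start (walk x (X · ω)) (t + 2)) (walk x (X · ω) (t + 1)) ∂μ ≤
      ∫ ω, potential y r (run xl y start (walk x (X · ω)) (t + 1)) (walk x (X · ω) t) ∂μ := by
  have := hindep.isProbabilityMeasure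
  have hslope := dependsOn_run_walk (xl := xl) (y := y) start x (fun st _ => slope y r st) t
  refine integral_le_of_le_add_mul_indepFun
    (integrable_potential_run_walk start x hmeas hxy hy hr₀ hr₁ t)
    (integrable_potential_run_walk start x hmeas hxy hy hr₀ hr₁ (t + 1))
    (hslope.measurable_comp hmeas).aestronglyMeasurable
    (.of_forall fun ω => slope_nonneg hr₀ hy.le _) (.of_forall fun ω => slope_le_one hr₀ hr₁ hy _)
    (hint t) (hmean t)
    ((hslope.indepFun_comp hindep hmeas (by simp)).comp measurable_id (measurable_of_countable _))
    ?_
  filter_upwards [hstep t] with ω hω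
  have hwalk : walk x (X · ω) (t + 1) = walk x (X · ω) t + X t ω := by
    simp only [walk, Finset.sum_range_succ, add_assoc]
  have := potential_next_le hr₀ hy hxl
    (admissible_next hxy (run xl y start (walk x (X · ω)) t) (walk x (X · ω) t))
    (s' := walk x (X · ω) (t + 1)) (by omega)
  simp only [hwalk, Int.cast_add, add_sub_cancel_left] at this
  simpa only [run, hwalk] using this

lemma measure_run_walk_eq_high_zero_le (hmeas : ∀ i, Measurable (X i)) (hindep : iIndepFun X μ)
    (hstep : ∀ i, ∀ᵐ ω ∂μ, -1 ≤ X i ω) (hint : ∀ i, Integrable (fun ω => (X i ω : ℝ)) μ)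
    (hmean : ∀ i, ∫ ω, (X i ω : ℝ) ∂μ ≤ 0) (hxy : xl ≤ y) (hy : 0 < y) (hr₀ : 0 ≤ r)
    (hr₁ : r ≤ 1) (hxl : (xl : ℝ) - 1 ≤ r * y) (k n : ℕ) :
    μ {ω | run xl y (high k) (walk x (X · ω)) n = high 0} ≤ ENNReal.ofReal (r ^ k) := by
  have := hindep.isProbabilityMeasure
  set Y : ℕ → Ω → ℝ := fun t ω =>
    potential y r (run xl y (high k) (walk x (X · ω)) (t + 1)) (walk x (X · ω) t)
  have hY := integrable_potential_run_walk (high k) x hmeas hxy hy hr₀ hr₁ (μ := μ)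
  have hY_zero (ω : Ω) : Y 0 ω ≤ r ^ k := calc
    Y 0 ω = potential y r (next xl y (high k) x) x := by simp [Y, run, walk]
    _ ≤ potential y r (high k) (x + 1) + slope y r (high k) * (x - (x + 1 : ℤ)) :=
      potential_next_le hr₀ hy hxl trivial (by omega)
    _ = r ^ k := by simp [potential, slope]
  have hY_le (t : ℕ) : ∫ ω, Y t ω ∂μ ≤ r ^ k := by
    induction t with
    | zero => simpa using integral_mono (hY 0) (integrable_const _) hY_zero
    | succ t ih => exact (integral_potential_run_walk_succ_le (high k) x hmeas hindep hstep hint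
        hmean hxy hy hr₀ hr₁ hxl t).trans ih
  have hY_nonneg (ω : Ω) : 0 ≤ Y n ω := potential_nonneg hr₀ hy (admissible_next hxy _ _)
  calc μ {ω | run xl y (high k) (walk x (X · ω)) n = high 0} ≤ μ {ω | 1 ≤ Y n ω} :=
        measure_mono fun ω hω => by
          simp only [Set.mem_ofPred_eq, Y, run_eq_high_zero_of_le n.le_succ hω, potential,
            pow_zero, le_refl]
    _ = ENNReal.ofReal (μ.real {ω | 1 ≤ Y n ω}) := (ofReal_measureReal).symm
    _ ≤ ENNReal.ofReal (r ^ k) := ENNReal.ofReal_le_ofReal <| by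
        simpa using (mul_meas_ge_le_integral_of_nonneg (.of_forall hY_nonneg) (hY n) 1).trans
          (hY_le n)

end Walk

end UpcrossingState

open UpcrossingState in
theorem stmt6_general {Ω : Type*} [MeasurableSpace Ω] (μ : Measure Ω) [IsProbabilityMeasure μ]
    (X : ℕ → Ω → ℤ) (hmeas : ∀ i, Measurable (X i))
    (hindep : iIndepFun X μ)
    (hident : ∀ i, IdentDistrib (X i) (X 0) μ μ)
    (hstep : ∀ i, ∀ᵐ ω ∂μ, -1 ≤ X i ω)
    (hint : Integrable (fun ω => (X 0 ω : ℝ)) μ)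
    (hmean : ∫ ω, (X 0 ω : ℝ) ∂μ ≤ 0)
    (x xl y : ℤ) (hxl : 0 < xl) (hxy : xl < y)
    (k : ℕ) (hk : 1 ≤ k) :
    μ {ω | (upTimes (fun t ω => x + ∑ i ∈ Finset.range t, X i ω) xl y (k - 1) ω).2 <
        ⨅ (t : ℕ) (_ : x + ∑ i ∈ Finset.range t, X i ω ≤ 0), (t : ℕ∞)} ≤
      ENNReal.ofReal ((((xl : ℝ) - 1) / (y : ℝ)) ^ k) := by
  have hy : (0 : ℝ) < y := by exact_mod_cast hxl.trans hxy
  have hxl₁ : (1 : ℝ) ≤ xl := by exact_mod_cast hxl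
  have hxy' : (xl : ℝ) ≤ y := by exact_mod_cast hxy.le
  have hint' (i : ℕ) : Integrable (fun ω => (X i ω : ℝ)) μ :=
    ((hident i).comp (measurable_of_countable _)).integrable_iff.mpr hint
  have hmean' (i : ℕ) : ∫ ω, (X i ω : ℝ) ∂μ ≤ 0 :=
    ((hident i).comp (measurable_of_countable (Int.cast : ℤ → ℝ))).integral_eq ▸ hmean
  refine (measure_mono (t := ⋃ n, {ω | run xl y (high k) (walk x (X · ω)) n = high 0})
    fun ω hω => Set.mem_iUnion.mpr
    (exists_run_eq_high_zero (S := fun t ω => walk x (X · ω) t) hk hω)).trans ?_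
  have hmono : Monotone fun n => {ω | run xl y (high k) (walk x (X · ω)) n = high 0} :=
    fun a b hab ω hω => run_eq_high_zero_of_le hab hω
  rw [hmono.measure_iUnion]
  exact iSup_le fun n => measure_run_walk_eq_high_zero_le x hmeas hindep hstep hint' hmean'
    hxy.le (hxl.trans hxy) (div_nonneg (by linarith) hy.le) ((div_le_one hy).mpr (by linarith))
    (div_mul_cancel₀ _ hy.ne').ge k n

theorem stmt6 {Ω : Type*} [MeasurableSpace Ω] (μ : Measure Ω) [IsProbabilityMeasure μ]
    (X : ℕ → Ω → ℤ) (hmeas : ∀ i, Measurable (X i))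
    (hindep : iIndepFun X μ)
    (hident : ∀ i, IdentDistrib (X i) (X 0) μ μ)
    (hstep : ∀ i, ∀ᵐ ω ∂μ, -1 ≤ X i ω)
    (hint : Integrable (fun ω => (X 0 ω : ℝ)) μ)
    (hmean : ∫ ω, (X 0 ω : ℝ) ∂μ ≤ 0)
    (x xl y : ℤ) (hx : 0 < x) (hxl : 0 < xl) (hxy : xl < y)
    (k : ℕ) (hk : 1 ≤ k) :
    μ {ω | (upTimes (fun t ω => x + ∑ i ∈ Finset.range t, X i ω) xl y (k - 1) ω).2 <
        ⨅ (t : ℕ) (_ : x + ∑ i ∈ Finset.range t, X i ω ≤ 0), (t : ℕ∞)} ≤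
      ENNReal.ofReal ((((xl : ℝ) - 1) / (y : ℝ)) ^ k) :=
  stmt6_general μ X hmeas hindep hident hstep hint hmean x xl y hxl hxy k hk
end

section
/- Fix a real number α ∈ (1, 2]. For every real x > 6/(α−1), the sum Σ_{ℓ ≥ 0} 2^{ℓ − x·2^{ℓ(α−1)/2}} ≤ 2^{1−x}. -/
/-!
Since `2 ^ t ≥ 1 + t log 2` and `log 2 > 2/3`, the hypothesis `x (α - 1) > 6` makes the
exponent `ℓ - x 2^{ℓ(α-1)/2}` at most `-x - ℓ`, so the series is dominated by the geometric
series `∑ 2^{-x-ℓ} = 2^{1-x}`.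
-/

open Real

lemma tsum_two_rpow_le_of_le_sub {a : ℕ → ℝ} {b : ℝ} (h : ∀ ℓ : ℕ, a ℓ ≤ b - ℓ) :
    ∑' ℓ : ℕ, (2 : ℝ) ^ a ℓ ≤ 2 ^ (b + 1) := by
  have hgeom : HasSum (fun ℓ : ℕ => (2 : ℝ) ^ b * (1 / 2) ^ ℓ) (2 ^ (b + 1)) := by
    rw [rpow_add two_pos, rpow_one]
    exact hasSum_geometric_two.mul_left _
  have hle : ∀ ℓ : ℕ, (2 : ℝ) ^ a ℓ ≤ 2 ^ b * (1 / 2) ^ ℓ := fun ℓ => by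
    calc (2 : ℝ) ^ a ℓ ≤ 2 ^ (b - ℓ) := rpow_le_rpow_of_exponent_le one_le_two (h ℓ)
      _ = 2 ^ b * (1 / 2) ^ ℓ := by
        rw [rpow_sub two_pos, rpow_natCast, one_div_pow, div_eq_mul_one_div]
  have hsum : Summable fun ℓ : ℕ => (2 : ℝ) ^ a ℓ :=
    hgeom.summable.of_nonneg_of_le (fun ℓ => by positivity) hle
  exact hgeom.tsum_eq ▸ hsum.tsum_le_tsum hle hgeom.summable

lemma one_add_mul_log_two_le_two_rpow (t : ℝ) : 1 + t * log 2 ≤ (2 : ℝ) ^ t := by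
  rw [rpow_def_of_pos two_pos, mul_comm, add_comm]
  exact add_one_le_exp _

lemma sub_mul_two_rpow_le_neg_sub {x c : ℝ} (hx : 0 ≤ x) (hxc : 2 ≤ x * c * log 2)
    {ℓ : ℝ} (hℓ : 0 ≤ ℓ) : ℓ - x * (2 : ℝ) ^ (ℓ * c) ≤ -x - ℓ := by
  have hexp := mul_le_mul_of_nonneg_left (one_add_mul_log_two_le_two_rpow (ℓ * c)) hx
  nlinarith

theorem stmt10_general (α : ℝ) (hα1 : 1 < α) (x : ℝ) (hx : 6 / (α - 1) < x) :
    ∑' ℓ : ℕ, (2 : ℝ) ^ ((ℓ : ℝ) - x * (2 : ℝ) ^ ((ℓ : ℝ) * (α - 1) / 2)) ≤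
      (2 : ℝ) ^ (1 - x) := by
  have hα : 0 < α - 1 := sub_pos.mpr hα1
  have hx6 : 6 < x * (α - 1) := (div_lt_iff₀ hα).mp hx
  have hx0 : 0 ≤ x := le_of_lt (lt_trans (by positivity) hx)
  have hxc : 2 ≤ x * ((α - 1) / 2) * log 2 := by
    have := log_two_gt_d9
    nlinarith
  rw [← neg_add_eq_sub x 1]
  refine tsum_two_rpow_le_of_le_sub fun ℓ => ?_
  rw [mul_div_assoc]
  exact sub_mul_two_rpow_le_neg_sub hx0 hxc ℓ.cast_nonneg

theorem stmt10 (α : ℝ) (hα1 : 1 < α) (hα2 : α ≤ 2) (x : ℝ) (hx : 6 / (α - 1) < x) :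
    ∑' ℓ : ℕ, (2 : ℝ) ^ ((ℓ : ℝ) - x * (2 : ℝ) ^ ((ℓ : ℝ) * (α - 1) / 2)) ≤
      (2 : ℝ) ^ (1 - x) :=
  stmt10_general α hα1 x hx
end

section
/- Let X₁, X₂ be i.i.d. copies of an integer random variable X with P(X ≥ −1) = 1, and let m ≥ 1 be an integer. Then E[(X₁ − X₂)²·1{|X₁ − X₂| ≤ 2^m}] ≥ (P(X = −1)/16) · E[X²·1{X ∈ [0, 2^m)}]. -/
/-!
Restrict the left side to the event `X₂ = -1`. There `X₁ - X₂ = X₁ + 1`, so whenever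
`0 ≤ X₁ < 2 ^ m` the difference lies in `(0, 2 ^ m]` and `(X₁ - X₂)² ≥ X₁²`. Independence
factorizes the expectation of `X₁² 1{0 ≤ X₁ < 2 ^ m} 1{X₂ = -1}` as
`P(X₂ = -1) E[X₁² 1{0 ≤ X₁ < 2 ^ m}]`, and `P(X₂ = -1) = P(X₁ = -1)` since the copies are
identically distributed.
-/

open MeasureTheory ProbabilityTheory

theorem ProbabilityTheory.IndepFun.integral_comp_mul_indicator_comp {Ω α β : Type*}
    [MeasurableSpace Ω] {μ : Measure Ω} [MeasurableSpace α] [MeasurableSpace β] {X : Ω → α} {Y : Ω → β}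
    (hXY : IndepFun X Y μ) (hX : AEMeasurable X μ) (hY : AEMeasurable Y μ) {f : α → ℝ}
    (hf : AEStronglyMeasurable f (μ.map X)) {s : Set β} (hs : MeasurableSet s) :
    ∫ ω, f (X ω) * s.indicator 1 (Y ω) ∂μ = (∫ ω, f (X ω) ∂μ) * μ.real (Y ⁻¹' s) := by
  have hind : ∫ ω, s.indicator (1 : β → ℝ) (Y ω) ∂μ = μ.real (Y ⁻¹' s) := by
    rw [← integral_map hY (aestronglyMeasurable_one.indicator hs), integral_indicator_one hs,
      measureReal_def, Measure.map_apply_of_aemeasurable hY hs, measureReal_def]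
  rw [← hind]
  exact hXY.integral_comp_mul_comp hX hY hf (aestronglyMeasurable_one.indicator hs)

theorem integrable_comp_of_norm_le {Ω α : Type*} [MeasurableSpace Ω] {μ : Measure Ω}
    [IsFiniteMeasure μ] [MeasurableSpace α] [DiscreteMeasurableSpace α] {Z : Ω → α}
    (hZ : AEMeasurable Z μ) {φ : α → ℝ} {C : ℝ} (hφ : ∀ a, ‖φ a‖ ≤ C) :
    Integrable (fun ω => φ (Z ω)) μ :=
  .of_bound (Measurable.of_discrete.comp_aemeasurable hZ).aestronglyMeasurable C
    (.of_forall fun ω => hφ (Z ω))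

theorem sq_mul_indicator_le_sq_sub (x y N : ℤ) :
    (if 0 ≤ x ∧ x < N then (x : ℝ) ^ 2 else 0) * ({-1} : Set ℤ).indicator 1 y ≤
      if |x - y| ≤ N then ((x : ℝ) - y) ^ 2 else 0 := by
  by_cases hy : y = -1
  · subst hy
    by_cases hx : 0 ≤ x ∧ x < N
    · have hdiff : |x - -1| ≤ N := by rw [abs_le]; omega
      have hx₀ : (0 : ℝ) ≤ x := by exact_mod_cast hx.1
      simp only [hx, hdiff, and_self, if_true, Set.indicator_of_mem (Set.mem_singleton _),
        Pi.one_apply, mul_one, Int.cast_neg, Int.cast_one]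
      nlinarith
    · simp only [hx, if_false, zero_mul]
      split_ifs <;> positivity
  · simp only [Set.indicator_of_notMem (Set.notMem_singleton_iff.mpr hy), mul_zero]
    split_ifs <;> positivity

theorem norm_ite_sq_sub_le (x y N : ℤ) :
    ‖if |x - y| ≤ N then ((x : ℝ) - y) ^ 2 else 0‖ ≤ (N : ℝ) ^ 2 := by
  split_ifs with h
  · rw [Real.norm_eq_abs, abs_sq]
    have h' : |(x : ℝ) - y| ≤ N := by exact_mod_cast h
    exact sq_le_sq' (abs_le.mp h').1 (abs_le.mp h').2
  · simpa using sq_nonneg (N : ℝ)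

theorem stmt14_general {Ω : Type*} [MeasurableSpace Ω] (μ : Measure Ω) [IsProbabilityMeasure μ]
    (X₁ X₂ : Ω → ℤ)
    (hindep : IndepFun X₁ X₂ μ)
    (hident : IdentDistrib X₂ X₁ μ μ)
    (m : ℕ) :
    (μ {ω | X₁ ω = -1}).toReal / 16 *
        ∫ ω, (if 0 ≤ X₁ ω ∧ X₁ ω < 2 ^ m then (X₁ ω : ℝ) ^ 2 else 0) ∂μ ≤
      ∫ ω, (if |X₁ ω - X₂ ω| ≤ 2 ^ m then ((X₁ ω : ℝ) - (X₂ ω : ℝ)) ^ 2 else 0) ∂μ := by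
  set f : ℤ → ℝ := fun x => if 0 ≤ x ∧ x < 2 ^ m then (x : ℝ) ^ 2 else 0
  have hX₁ := hident.aemeasurable_snd
  have hX₂ := hident.aemeasurable_fst
  have hF : Integrable (fun ω =>
      if |X₁ ω - X₂ ω| ≤ 2 ^ m then ((X₁ ω : ℝ) - (X₂ ω : ℝ)) ^ 2 else 0) μ :=
    integrable_comp_of_norm_le (hX₁.prodMk hX₂)
      (φ := fun p : ℤ × ℤ => if |p.1 - p.2| ≤ 2 ^ m then ((p.1 : ℝ) - p.2) ^ 2 else 0)
      fun p => norm_ite_sq_sub_le p.1 p.2 (2 ^ m)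
  have hprob : μ.real (X₂ ⁻¹' {-1}) = (μ {ω | X₁ ω = -1}).toReal := by
    rw [measureReal_def, hident.measure_mem_eq (measurableSet_singleton _)]; rfl
  have hf₀ : 0 ≤ ∫ ω, f (X₁ ω) ∂μ := integral_nonneg fun ω => by dsimp only [f]; positivity
  calc (μ {ω | X₁ ω = -1}).toReal / 16 * ∫ ω, f (X₁ ω) ∂μ
      ≤ (∫ ω, f (X₁ ω) ∂μ) * μ.real (X₂ ⁻¹' {-1}) := by
        rw [hprob, mul_comm]
        gcongr
        linarith [ENNReal.toReal_nonneg (a := μ {ω | X₁ ω = -1})]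
    _ = ∫ ω, f (X₁ ω) * ({-1} : Set ℤ).indicator 1 (X₂ ω) ∂μ :=
        (hindep.integral_comp_mul_indicator_comp hX₁ hX₂
          Measurable.of_discrete.aestronglyMeasurable (measurableSet_singleton _)).symm
    _ ≤ _ := integral_mono_of_nonneg
        (.of_forall fun ω => mul_nonneg (by dsimp only [f]; positivity)
          (Set.indicator_nonneg (fun _ _ => zero_le_one) _)) hF
        (.of_forall fun ω => sq_mul_indicator_le_sq_sub (X₁ ω) (X₂ ω) (2 ^ m))

theorem stmt14 {Ω : Type*} [MeasurableSpace Ω] (μ : Measure Ω) [IsProbabilityMeasure μ]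
    (X₁ X₂ : Ω → ℤ) (h1 : Measurable X₁) (h2 : Measurable X₂)
    (hindep : IndepFun X₁ X₂ μ)
    (hident : IdentDistrib X₂ X₁ μ μ)
    (hstep : ∀ᵐ ω ∂μ, -1 ≤ X₁ ω) (m : ℕ) (hm : 1 ≤ m) :
    (μ {ω | X₁ ω = -1}).toReal / 16 *
        ∫ ω, (if 0 ≤ X₁ ω ∧ X₁ ω < 2 ^ m then (X₁ ω : ℝ) ^ 2 else 0) ∂μ ≤
      ∫ ω, (if |X₁ ω - X₂ ω| ≤ 2 ^ m then ((X₁ ω : ℝ) - (X₂ ω : ℝ)) ^ 2 else 0) ∂μ :=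
  stmt14_general μ X₁ X₂ hindep hident m
end

section
/- Let (S_t, t ≥ 0) be an integer random walk with S_0 = 1 whose i.i.d. steps satisfy X ≥ −1 almost surely, and let σ = inf{t : S_t = 0}. Then for every positive integer n, P(σ = n) = (1/n)·P(S_n − S_0 = −1) = (1/n)·P(Ŝ_n = n − 1), where Ŝ is the walk of the increments shifted by +1 (i.e., Ŝ_n = Σ_{i=1}^n (X_i + 1)). -/
/-!
Because every step is at least `-1`, the walk started at `1` cannot jump over `0`: it first hits
`0` at time `n` iff the step sum `S n` is `-1` and `S t ≥ 0` for `t < n`. For `n` steps of total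
sum `-1`, exactly one of the `n` cyclic rotations has this property (the cycle lemma), namely the
one starting at the first minimiser of the partial sums. I.i.d. steps are cyclically exchangeable,
so all rotations hit `0` first at time `n` with the same probability, and summing their indicators
gives `n · P(σ = n) = P(S n = -1)`.
-/

open Finset MeasureTheory ProbabilityTheory
open scoped ENNReal Fin.NatCast

theorem Nat.sInf_eq_iff_isLeast {s : Set ℕ} {n : ℕ} (hn : n ≠ 0) : sInf s = n ↔ IsLeast s n := by
  refine ⟨fun h => ?_, IsLeast.csInf_eq⟩
  obtain hs | hs := s.eq_empty_or_nonempty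
  · simp [hs] at h; omega
  · exact h ▸ ⟨Nat.sInf_mem hs, fun t ht => Nat.sInf_le ht⟩

section SkipFree

variable {x x' : ℕ → ℤ} {n : ℕ}

theorem isLeast_hit_congr (h : ∀ i < n, x i = x' i) :
    IsLeast {t | 1 + ∑ i ∈ range t, x i = 0} n ↔ IsLeast {t | 1 + ∑ i ∈ range t, x' i = 0} n := by
  have hsum : ∀ t ≤ n, ∑ i ∈ range t, x i = ∑ i ∈ range t, x' i := fun t ht =>
    sum_congr rfl fun i hi => h i (by simp at hi; omega)
  simp only [IsLeast, lowerBounds, Set.mem_ofPred_eq, hsum n le_rfl]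
  refine and_congr_right fun _ => forall_congr' fun t => ?_
  by_cases ht : t ≤ n
  · rw [hsum t ht]
  · constructor <;> intro _ _ <;> omega

theorem isLeast_hit_iff_of_neg_one_le (hx : ∀ i < n, -1 ≤ x i) :
    IsLeast {t | 1 + ∑ i ∈ range t, x i = 0} n ↔
      ∑ i ∈ range n, x i = -1 ∧ ∀ t < n, 0 ≤ ∑ i ∈ range t, x i := by
  constructor
  · rintro ⟨hit, hfirst⟩
    refine ⟨by simp only [Set.mem_ofPred_eq] at hit; omega, fun t ht => ?_⟩
    induction t with
    | zero => simp
    | succ t ih =>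
      have hmiss : 1 + ∑ i ∈ range (t + 1), x i ≠ 0 := fun h => (hfirst h).not_gt ht
      rw [sum_range_succ] at hmiss ⊢
      have := ih (by omega)
      have := hx t (by omega)
      omega
  · rintro ⟨hsum, hnonneg⟩
    refine ⟨by simp [hsum], fun t ht => ?_⟩
    by_contra hlt
    have := hnonneg t (by omega)
    simp only [Set.mem_ofPred_eq] at ht
    omega

end SkipFree

section Periodic

variable {x : ℕ → ℤ} {n : ℕ}

theorem Function.Periodic.sum_range_add_period (hp : Function.Periodic x n) (t : ℕ) :
    ∑ i ∈ range (t + n), x i = ∑ i ∈ range t, x i + ∑ i ∈ range n, x i := by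
  induction t with
  | zero => simp
  | succ t ih => rw [add_right_comm, sum_range_succ, ih, sum_range_succ, hp t]; ring

theorem Function.Periodic.isLeast_hit_shift_iff (hp : Function.Periodic x n)
    (hx : ∀ i, -1 ≤ x i) (k : ℕ) :
    IsLeast {t | 1 + ∑ i ∈ range t, x (k + i) = 0} n ↔
      ∑ i ∈ range n, x i = -1 ∧ ∀ t < n, ∑ i ∈ range k, x i ≤ ∑ i ∈ range (k + t), x i := by
  have hshift : ∀ t, ∑ i ∈ range t, x (k + i) = ∑ i ∈ range (k + t), x i - ∑ i ∈ range k, x i :=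
    fun t => by rw [sum_range_add]; ring
  rw [isLeast_hit_iff_of_neg_one_le fun i _ => hx (k + i), hshift n, hp.sum_range_add_period]
  simp only [hshift, sub_nonneg]
  constructor <;> rintro ⟨h1, h2⟩ <;> exact ⟨by omega, h2⟩

theorem Function.Periodic.existsUnique_shift_partialSums_nonneg (hp : Function.Periodic x n)
    (hn : n ≠ 0) (hsum : ∑ i ∈ range n, x i = -1) :
    ∃! k, k < n ∧ ∀ t < n, ∑ i ∈ range k, x i ≤ ∑ i ∈ range (k + t), x i := by
  set S : ℕ → ℤ := fun t => ∑ i ∈ range t, x i with hS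
  have hperiod : ∀ t, S (t + n) = S t - 1 := fun t => by
    simp only [hS, hp.sum_range_add_period, hsum]; ring
  have hno_two : ∀ a b, a < b → b < n →
      (∀ t < n, S a ≤ S (a + t)) → (∀ t < n, S b ≤ S (b + t)) → False := fun a b hab hbn ha hb => by
    have h1 := ha (b - a) (by omega)
    have h2 := hb (n - b + a) (by omega)
    rw [show a + (b - a) = b by omega] at h1
    rw [show b + (n - b + a) = a + n by omega, hperiod] at h2
    omega
  obtain ⟨k₀, ⟨hk₀, hk₀_min⟩, hk₀_first⟩ :
      ∃ k₀, (k₀ < n ∧ ∀ j < n, S k₀ ≤ S j) ∧ ∀ j < k₀, ∃ j' < n, S j' < S j := by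
    have hmin : ∃ k, k < n ∧ ∀ j < n, S k ≤ S j := by
      obtain ⟨k, hk, hk_min⟩ := exists_min_image (range n) S ⟨0, by simp; omega⟩
      exact ⟨k, by simpa using hk, fun j hj => hk_min j (by simpa using hj)⟩
    refine ⟨Nat.find hmin, Nat.find_spec hmin, fun j hj => ?_⟩
    have hj_not_min := Nat.find_min hmin hj
    push Not at hj_not_min
    exact hj_not_min (hj.trans (Nat.find_spec hmin).1)
  have hk₀_good : ∀ t < n, S k₀ ≤ S (k₀ + t) := fun t ht => by
    by_cases hwrap : k₀ + t < n
    · exact hk₀_min _ hwrap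
    · obtain ⟨j', hj', hlt⟩ := hk₀_first (k₀ + t - n) (by omega)
      rw [show k₀ + t = k₀ + t - n + n by omega, hperiod]
      linarith [hk₀_min j' hj']
  refine ⟨k₀, ⟨hk₀, hk₀_good⟩, fun k ⟨hk, hk_good⟩ => ?_⟩
  rcases lt_trichotomy k k₀ with h | h | h
  · exact (hno_two k k₀ h hk₀ hk_good hk₀_good).elim
  · exact h
  · exact (hno_two k₀ k h hk hk₀_good hk_good).elim

end Periodic

section Tuples

variable {n : ℕ} [NeZero n]

/- With `Fin.NatCast`, `y (i : Fin n)` reads `y` at `i mod n`, so `fun i : ℕ => y (i : Fin n)` is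
the `n`-periodic extension of `y`. -/

theorem card_rotations_isLeast_hit (y : Fin n → ℤ) (hy : ∀ i, -1 ≤ y i) :
    #{k : Fin n | IsLeast {t | 1 + ∑ i ∈ range t, y (k + (i : Fin n)) = 0} n} =
      if ∑ i, y i = -1 then 1 else 0 := by
  set x : ℕ → ℤ := fun i => y (i : Fin n)
  have hp : Function.Periodic x n := fun i => by simp [x]
  have hrot : ∀ (k : Fin n) (i : ℕ), y (k + (i : Fin n)) = x (k + i) := fun k i => by simp [x]
  have hsum : ∑ i, y i = ∑ i ∈ range n, x i := by
    simp only [x, ← Fin.sum_univ_eq_sum_range, Fin.cast_val_eq_self]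
  simp only [hrot, hp.isLeast_hit_shift_iff (fun i => hy i), hsum]
  split_ifs with h
  · obtain ⟨k, ⟨hk, hk_good⟩, hk_unique⟩ :=
      hp.existsUnique_shift_partialSums_nonneg (NeZero.ne n) h
    rw [card_eq_one]
    refine ⟨⟨k, hk⟩, ?_⟩
    ext k'
    simp only [mem_filter, mem_univ, true_and, mem_singleton, h]
    exact ⟨fun hk' => Fin.ext (hk_unique _ ⟨k'.2, hk'⟩), fun hk' => hk' ▸ hk_good⟩
  · simp [h]

theorem measure_sum_eq_neg_one_eq_mul_isLeast_hit (ν : Measure (Fin n → ℤ))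
    (hrot : ∀ k : Fin n, MeasurePreserving (fun y i => y (k + i)) ν ν)
    (hstep : ∀ᵐ y ∂ν, ∀ i, -1 ≤ y i) :
    ν {y | ∑ i, y i = -1} = n * ν {y | IsLeast {t | 1 + ∑ i ∈ range t, y (i : Fin n) = 0} n} := by
  set H := {y : Fin n → ℤ | IsLeast {t | 1 + ∑ i ∈ range t, y (i : Fin n) = 0} n}
  calc ν {y | ∑ i, y i = -1}
      = ∫⁻ y, ∑ k : Fin n, H.indicator 1 (fun i => y (k + i)) ∂ν := by
        rw [← lintegral_indicator_one (.of_discrete)]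
        refine lintegral_congr_ae (hstep.mono fun y hy => ?_)
        simp only [Set.indicator_apply, Pi.one_apply, sum_boole, H, Set.mem_ofPred_eq,
          card_rotations_isLeast_hit y hy]
        split_ifs <;> simp
    _ = ∑ k : Fin n, ν H := by
        rw [lintegral_finsetSum _ fun k _ => measurable_of_countable _]
        refine sum_congr rfl fun k _ => ?_
        rw [(hrot k).lintegral_comp (measurable_of_countable _),
          lintegral_indicator_one .of_discrete]
    _ = n * ν H := by simp

theorem measurePreserving_pi_comp_equiv {ι α : Type*} [Fintype ι] [MeasurableSpace α]
    (ρ : Measure α) [SigmaFinite ρ] (e : ι ≃ ι) :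
    MeasurePreserving (fun y : ι → α => y ∘ e) (Measure.pi fun _ => ρ) (Measure.pi fun _ => ρ) := by
  convert measurePreserving_piCongrLeft (fun _ => ρ) e.symm with y
  ext i
  simp [MeasurableEquiv.coe_piCongrLeft, Equiv.piCongrLeft_apply]

theorem map_fin_eq_pi_of_iIndepFun {Ω β : Type*} [MeasurableSpace Ω] [MeasurableSpace β]
    {μ : Measure Ω} [IsProbabilityMeasure μ] {X : ℕ → Ω → β} (hmeas : ∀ i, Measurable (X i))
    (hindep : iIndepFun X μ) (hident : ∀ i, IdentDistrib (X i) (X 0) μ μ) (n : ℕ) :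
    μ.map (fun ω (i : Fin n) => X i ω) = Measure.pi fun _ => μ.map (X 0) := by
  rw [(iIndepFun_iff_map_fun_eq_pi_map (f := fun i : Fin n => X i)
    fun i => (hmeas i).aemeasurable).1 (hindep.precomp Fin.val_injective)]
  simp only [(hident _).map_eq]

theorem measure_sInf_hit_eq_inv_mul {Ω : Type*} [MeasurableSpace Ω] (μ : Measure Ω)
    [IsProbabilityMeasure μ] (X : ℕ → Ω → ℤ) (hmeas : ∀ i, Measurable (X i))
    (hindep : iIndepFun X μ) (hident : ∀ i, IdentDistrib (X i) (X 0) μ μ)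
    (hstep : ∀ i, ∀ᵐ ω ∂μ, -1 ≤ X i ω) {n : ℕ} (hn : n ≠ 0) :
    μ {ω | sInf {t : ℕ | 1 + ∑ i ∈ Finset.range t, X i ω = 0} = n} =
      (n : ℝ≥0∞)⁻¹ * μ {ω | ∑ i ∈ Finset.range n, X i ω = -1} := by
  have : NeZero n := ⟨hn⟩
  set Y : Ω → Fin n → ℤ := fun ω i => X i ω
  have hY : Measurable Y := measurable_pi_lambda _ fun i => hmeas i
  have hlaw := map_fin_eq_pi_of_iIndepFun hmeas hindep hident n
  have hcycle := measure_sum_eq_neg_one_eq_mul_isLeast_hit (μ.map Y)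
    (fun k => hlaw ▸ measurePreserving_pi_comp_equiv _ (Equiv.addLeft k))
    ((ae_map_iff hY.aemeasurable .of_discrete).2 (ae_all_iff.2 fun i => hstep i))
  rw [Measure.map_apply hY .of_discrete, Measure.map_apply hY .of_discrete] at hcycle
  have hsum : Y ⁻¹' {y | ∑ i, y i = -1} = {ω | ∑ i ∈ range n, X i ω = -1} := by
    ext ω
    simp only [Set.mem_preimage, Set.mem_ofPred_eq, Y, Fin.sum_univ_eq_sum_range (X · ω)]
  have hhit : Y ⁻¹' {y | IsLeast {t | 1 + ∑ i ∈ range t, y (i : Fin n) = 0} n} =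
      {ω | sInf {t : ℕ | 1 + ∑ i ∈ range t, X i ω = 0} = n} := by
    ext ω
    simp only [Set.mem_preimage, Set.mem_ofPred_eq, Nat.sInf_eq_iff_isLeast hn, Y]
    exact isLeast_hit_congr fun i hi => by rw [Fin.val_natCast, Nat.mod_eq_of_lt hi]
  rw [← hsum, ← hhit, hcycle, ← mul_assoc,
    ENNReal.inv_mul_cancel (by exact_mod_cast hn) (ENNReal.natCast_ne_top n), one_mul]

theorem stmt15 {Ω : Type*} [MeasurableSpace Ω] (μ : Measure Ω) [IsProbabilityMeasure μ]
    (X : ℕ → Ω → ℤ) (hmeas : ∀ i, Measurable (X i))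
    (hindep : iIndepFun X μ)
    (hident : ∀ i, IdentDistrib (X i) (X 0) μ μ)
    (hstep : ∀ i, ∀ᵐ ω ∂μ, -1 ≤ X i ω)
    (n : ℕ) (hn : 1 ≤ n) :
    μ {ω | sInf {t : ℕ | 1 + ∑ i ∈ Finset.range t, X i ω = 0} = n} =
        (n : ℝ≥0∞)⁻¹ * μ {ω | ∑ i ∈ Finset.range n, X i ω = -1} ∧
      μ {ω | sInf {t : ℕ | 1 + ∑ i ∈ Finset.range t, X i ω = 0} = n} =
        (n : ℝ≥0∞)⁻¹ * μ {ω | ∑ i ∈ Finset.range n, (X i ω + 1) = (n : ℤ) - 1} := by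
  have hshift : ∀ ω, ∑ i ∈ Finset.range n, (X i ω + 1) = (n : ℤ) - 1 ↔
      ∑ i ∈ Finset.range n, X i ω = -1 := fun ω => by
    rw [sum_add_distrib, sum_const, card_range, nsmul_one]; omega
  simp only [hshift]
  exact ⟨measure_sInf_hit_eq_inv_mul μ X hmeas hindep hident hstep (by omega),
    measure_sInf_hit_eq_inv_mul μ X hmeas hindep hident hstep (by omega)⟩
end Tuples
end
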